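/- arXiv:2107.04993 — 7 statements merged into one kernel-verified Lean document; each statement's English description precedes it below -/
import Mathlib

section
/- For every simple graph G with m edges and every fixed linear order ≺ of its vertices, the edge set of G can be partitioned into at most ⌊√(2m)⌋ parts, each of which is either a stack or a queue with respect to ≺. In particular, the mixed page number of G is at most ⌊√(2m)⌋. -/
namespace MixedPaper

variable {V : Type*}

/-- Edges `e₁ = {a,b}` and `e₂ = {c,d}` cross in the pattern `a ≺ c ≺ b ≺ d`,
with respect to the linear vertex order induced by the injection `f`.
(The symmetric pattern `c ≺ a ≺ d ≺ b` is `Cross f e₂ e₁`.) -/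
def Cross (f : V → ℕ) (e₁ e₂ : Sym2 V) : Prop :=
  ∃ a b c d : V, e₁ = s(a, b) ∧ e₂ = s(c, d) ∧ f a < f c ∧ f c < f b ∧ f b < f d

/-- Edge `e₂ = {c,d}` nests inside `e₁ = {a,b}`: `a ≺ c ≺ d ≺ b`.
(The symmetric pattern `c ≺ a ≺ b ≺ d` is `Nest f e₂ e₁`.) -/
def Nest (f : V → ℕ) (e₁ e₂ : Sym2 V) : Prop :=
  ∃ a b c d : V, e₁ = s(a, b) ∧ e₂ = s(c, d) ∧ f a < f c ∧ f c < f d ∧ f d < f b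

/-- A set of edges is a stack (w.r.t. the order `f`) if no two of its edges cross. -/
def IsStack (f : V → ℕ) (S : Set (Sym2 V)) : Prop :=
  ∀ e₁ ∈ S, ∀ e₂ ∈ S, ¬ Cross f e₁ e₂

/-- A set of edges is a queue (w.r.t. the order `f`) if no two of its edges nest. -/
def IsQueue (f : V → ℕ) (S : Set (Sym2 V)) : Prop :=
  ∀ e₁ ∈ S, ∀ e₂ ∈ S, ¬ Nest f e₁ e₂

/-- An `s`-stack `q`-queue layout of `G` with respect to the fixed vertex order `f`:
a partition of the edge set of `G` into `s` stacks and `q` queues (pages `0,…,s-1`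
are stacks, pages `s,…,s+q-1` are queues). -/
def MixedLayoutOn (G : SimpleGraph V) (f : V → ℕ) (s q : ℕ) : Prop :=
  ∃ P : Sym2 V → ℕ,
    (∀ e ∈ G.edgeSet, P e < s + q) ∧
    (∀ i < s, IsStack f {e | e ∈ G.edgeSet ∧ P e = i}) ∧
    (∀ i, s ≤ i → i < s + q → IsQueue f {e | e ∈ G.edgeSet ∧ P e = i})

/-- `G` admits an `s`-stack `q`-queue layout (for some linear vertex order). -/
def HasMixedLayout (G : SimpleGraph V) (s q : ℕ) : Prop :=
  ∃ f : V → ℕ, Function.Injective f ∧ MixedLayoutOn G f s q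

/-- The mixed page number of `G`: the minimum `s + q` over all
`s`-stack `q`-queue layouts of `G`. -/
noncomputable def mixedPageNumber (G : SimpleGraph V) : ℕ :=
  sInf {k | ∃ s q, s + q = k ∧ HasMixedLayout G s q}

/-- The smaller endpoint (in the order `f`) of an edge. -/
noncomputable def lo (f : V → ℕ) (e : Sym2 V) : ℕ :=
  Sym2.lift ⟨fun a b => min (f a) (f b), fun a b => min_comm _ _⟩ e

/-- The larger endpoint (in the order `f`) of an edge. -/
noncomputable def hi (f : V → ℕ) (e : Sym2 V) : ℕ :=
  Sym2.lift ⟨fun a b => max (f a) (f b), fun a b => max_comm _ _⟩ e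

lemma nest_iff (f : V → ℕ) (e₁ e₂ : Sym2 V) :
    Nest f e₁ e₂ ↔ lo f e₁ < lo f e₂ ∧ lo f e₂ < hi f e₂ ∧ hi f e₂ < hi f e₁ := by
  constructor
  · rintro ⟨a, b, c, d, rfl, rfl, h1, h2, h3⟩
    simp only [lo, hi, Sym2.lift_mk]
    omega
  · induction e₁ using Sym2.ind with | _ a b =>
    induction e₂ using Sym2.ind with | _ c d =>
    simp only [lo, hi, Sym2.lift_mk]
    intro h
    rcases le_total (f a) (f b) with h1 | h1 <;> rcases le_total (f c) (f d) with h2 | h2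
    · exact ⟨a, b, c, d, rfl, rfl, by omega, by omega, by omega⟩
    · exact ⟨a, b, d, c, rfl, Sym2.eq_swap, by omega, by omega, by omega⟩
    · exact ⟨b, a, c, d, Sym2.eq_swap, rfl, by omega, by omega, by omega⟩
    · exact ⟨b, a, d, c, Sym2.eq_swap, Sym2.eq_swap, by omega, by omega, by omega⟩

lemma cross_iff (f : V → ℕ) (e₁ e₂ : Sym2 V) :
    Cross f e₁ e₂ ↔ lo f e₁ < lo f e₂ ∧ lo f e₂ < hi f e₁ ∧ hi f e₁ < hi f e₂ := by
  constructor
  · rintro ⟨a, b, c, d, rfl, rfl, h1, h2, h3⟩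
    simp only [lo, hi, Sym2.lift_mk]
    omega
  · induction e₁ using Sym2.ind with | _ a b =>
    induction e₂ using Sym2.ind with | _ c d =>
    simp only [lo, hi, Sym2.lift_mk]
    intro h
    rcases le_total (f a) (f b) with h1 | h1 <;> rcases le_total (f c) (f d) with h2 | h2
    · exact ⟨a, b, c, d, rfl, rfl, by omega, by omega, by omega⟩
    · exact ⟨a, b, d, c, rfl, Sym2.eq_swap, by omega, by omega, by omega⟩
    · exact ⟨b, a, c, d, Sym2.eq_swap, rfl, by omega, by omega, by omega⟩
    · exact ⟨b, a, d, c, Sym2.eq_swap, Sym2.eq_swap, by omega, by omega, by omega⟩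

lemma nest_trans {f : V → ℕ} {x y z : Sym2 V} (h1 : Nest f x y) (h2 : Nest f y z) :
    Nest f x z := by
  rw [nest_iff] at *
  omega

lemma not_nest_self {f : V → ℕ} {x : Sym2 V} : ¬ Nest f x x := by
  rw [nest_iff]; omega

lemma not_cross_of_nest {f : V → ℕ} {x y : Sym2 V}
    (h : x = y ∨ Nest f x y ∨ Nest f y x) : ¬ Cross f x y := by
  rw [cross_iff]
  rcases h with rfl | h | h
  · omega
  · rw [nest_iff] at h; omega
  · rw [nest_iff] at h; omega

open Classical in
noncomputable def depth (f : V → ℕ) (E : Finset (Sym2 V)) (e : Sym2 V) : ℕ :=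
  1 + (E.filter (fun e' => Nest f e' e)).attach.sup (fun e' => depth f E e'.1)
termination_by lo f e
decreasing_by
  have h := e'.2
  rw [Finset.mem_filter] at h
  have := (nest_iff f e'.1 e).mp h.2
  omega

open Classical in
lemma depth_eq (f : V → ℕ) (E : Finset (Sym2 V)) (e : Sym2 V) :
    depth f E e
      = 1 + (E.filter (fun e' => Nest f e' e)).attach.sup (fun e' => depth f E e'.1) := by
  rw [depth]

lemma one_le_depth (f : V → ℕ) (E : Finset (Sym2 V)) (e : Sym2 V) : 1 ≤ depth f E e := by
  rw [depth_eq]; omega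

open Classical in
lemma depth_lt_depth (f : V → ℕ) (E : Finset (Sym2 V)) {e' e : Sym2 V}
    (h1 : e' ∈ E) (h2 : Nest f e' e) : depth f E e' < depth f E e := by
  have hm : e' ∈ E.filter (fun x => Nest f x e) := Finset.mem_filter.mpr ⟨h1, h2⟩
  have : depth f E e' ≤ (E.filter (fun x => Nest f x e)).attach.sup (fun x => depth f E x.1) :=
    Finset.le_sup (f := fun x => depth f E x.1) (Finset.mem_attach _ ⟨e', hm⟩)
  rw [depth_eq f E e]
  omega

open Classical in
lemma exists_chain (f : V → ℕ) (E : Finset (Sym2 V)) :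
    ∀ n : ℕ, ∀ e ∈ E, depth f E e = n →
      ∃ C : Finset (Sym2 V), C ⊆ E ∧ e ∈ C ∧ C.card = n ∧
        (∀ x ∈ C, x ≠ e → Nest f x e) ∧
        (∀ x ∈ C, ∀ y ∈ C, x = y ∨ Nest f x y ∨ Nest f y x) := by
  intro n
  induction n using Nat.strong_induction_on with
  | _ n ih =>
    intro e he hd
    rcases Finset.eq_empty_or_nonempty (E.filter (fun e' => Nest f e' e)) with hF | hF
    · have hn : n = 1 := by rw [← hd, depth_eq, hF]; simp
      refine ⟨{e}, by simpa using he, Finset.mem_singleton_self e, by simp [hn], ?_, ?_⟩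
      · intro x hx hne
        simp only [Finset.mem_singleton] at hx
        exact absurd hx hne
      · intro x hx y hy
        simp only [Finset.mem_singleton] at hx hy
        subst hx; subst hy; left; rfl
    · obtain ⟨b, _, hsup⟩ :=
        Finset.exists_mem_eq_sup ((E.filter (fun e' => Nest f e' e)).attach)
          (Finset.attach_nonempty_iff.mpr hF) (fun x => depth f E x.1)
      have hbmem := b.2
      rw [Finset.mem_filter] at hbmem
      obtain ⟨hbE, hbN⟩ := hbmem
      have hdb : depth f E b.1 = n - 1 := by
        rw [depth_eq] at hd
        omega
      have hn1 : 1 ≤ n := hd ▸ one_le_depth f E e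
      have hlt : n - 1 < n := by omega
      obtain ⟨C', hsub', hmem', hcard', hinn', hchain'⟩ := ih (n - 1) hlt b.1 hbE hdb
      have hNest : ∀ x ∈ C', Nest f x e := by
        intro x hx
        by_cases hxb : x = b.1
        · exact hxb ▸ hbN
        · exact nest_trans (hinn' x hx hxb) hbN
      have henot : e ∉ C' := fun hc => not_nest_self (hNest e hc)
      refine ⟨insert e C', ?_, Finset.mem_insert_self _ _, ?_, ?_, ?_⟩
      · intro x hx
        rcases Finset.mem_insert.mp hx with rfl | hx
        · exact he
        · exact hsub' hx
      · rw [Finset.card_insert_of_notMem henot, hcard']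
        omega
      · intro x hx hne
        rcases Finset.mem_insert.mp hx with rfl | hx
        · exact absurd rfl hne
        · exact hNest x hx
      · intro x hx y hy
        rcases Finset.mem_insert.mp hx with hxe | hx <;>
          rcases Finset.mem_insert.mp hy with hye | hy
        · left; rw [hxe, hye]
        · rw [hxe]; right; right; exact hNest y hy
        · rw [hye]; right; left; exact hNest x hx
        · exact hchain' x hx y hy

lemma isStack_mono {f : V → ℕ} {S T : Set (Sym2 V)} (h : T ⊆ S) (hS : IsStack f S) :
    IsStack f T := fun e₁ h1 e₂ h2 => hS e₁ (h h1) e₂ (h h2)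

lemma isQueue_mono {f : V → ℕ} {S T : Set (Sym2 V)} (h : T ⊆ S) (hS : IsQueue f S) :
    IsQueue f T := fun e₁ h1 e₂ h2 => hS e₁ (h h1) e₂ (h h2)

/-- Main combinatorial lemma: any finite edge set `E` with `2|E| < (j+1)²` splits into
`s` stacks and `q` queues with `s + q = j`. -/
lemma claim (f : V → ℕ) :
    ∀ j : ℕ, ∀ E : Finset (Sym2 V), 2 * E.card < (j + 1) * (j + 1) →
      ∃ s q : ℕ, s + q = j ∧ ∃ P : Sym2 V → ℕ,
        (∀ e ∈ E, P e < j) ∧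
        (∀ i < s, IsStack f {e | e ∈ E ∧ P e = i}) ∧
        (∀ i : ℕ, s ≤ i → i < j → IsQueue f {e | e ∈ E ∧ P e = i}) := by
  classical
  intro j
  induction j with
  | zero =>
    intro E hE
    have hEe : E = ∅ := Finset.card_eq_zero.mp (by omega)
    subst hEe
    exact ⟨0, 0, rfl, fun _ => 0, by simp, by omega, by omega⟩
  | succ j ih =>
    intro E hE
    by_cases hcase : ∀ e ∈ E, depth f E e ≤ j + 1
    · -- all nesting depths are at most j+1 : use j+1 queues
      refine ⟨0, j + 1, by omega, fun e => depth f E e - 1, ?_, by omega, ?_⟩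
      · intro e he
        show depth f E e - 1 < j + 1
        have h1 := one_le_depth f E e
        have h2 := hcase e he
        omega
      · intro i _ _ e₁ he₁ e₂ he₂ hne
        obtain ⟨hm1, hp1⟩ := he₁
        obtain ⟨hm2, hp2⟩ := he₂
        have hp1' : depth f E e₁ - 1 = i := hp1
        have hp2' : depth f E e₂ - 1 = i := hp2
        have hlt := depth_lt_depth f E hm1 hne
        have h1 := one_le_depth f E e₁
        have h2 := one_le_depth f E e₂
        omega
    · -- there is an edge of depth ≥ j+2 : peel off a nesting chain (a stack) and recurse
      push_neg at hcase
      obtain ⟨e, he, hde⟩ := hcase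
      obtain ⟨C, hsub, heC, hcard, _, hchain⟩ := exists_chain f E (depth f E e) e he rfl
      have hCcard : j + 2 ≤ C.card := by omega
      have hkey : (j + 1 + 1) * (j + 1 + 1) = (j + 1) * (j + 1) + 2 * j + 3 := by ring
      have hCle : C.card ≤ E.card := Finset.card_le_card hsub
      have hsd : (E \ C).card = E.card - C.card := Finset.card_sdiff_of_subset hsub
      have hEC : 2 * (E \ C).card < (j + 1) * (j + 1) := by omega
      obtain ⟨s', q', hsq, P', hP, hS, hQ⟩ := ih (E \ C) hEC
      refine ⟨s' + 1, q', by omega, fun e' => if e' ∈ C then 0 else P' e' + 1, ?_, ?_, ?_⟩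
      · intro e' he'
        by_cases hc : e' ∈ C
        · simp [hc]
        · have : e' ∈ E \ C := Finset.mem_sdiff.mpr ⟨he', hc⟩
          have := hP e' this
          simp only [hc, if_false]
          omega
      · intro i hi
        rcases i with _ | i'
        · -- page 0 is the chain C, a stack
          intro e₁ he₁ e₂ he₂
          obtain ⟨hm1, hp1⟩ := he₁
          obtain ⟨hm2, hp2⟩ := he₂
          have hc1 : e₁ ∈ C := by by_contra h; simp [h] at hp1
          have hc2 : e₂ ∈ C := by by_contra h; simp [h] at hp2
          exact not_cross_of_nest (hchain e₁ hc1 e₂ hc2)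
        · -- pages i'+1 for i' < s' are the stacks from the recursion
          have hi' : i' < s' := by omega
          refine isStack_mono ?_ (hS i' hi')
          intro e' he'
          obtain ⟨hm, hp⟩ := he'
          have hc : e' ∉ C := by
            intro h; simp [h] at hp
          simp only [hc, if_false] at hp
          exact ⟨Finset.mem_sdiff.mpr ⟨hm, hc⟩, by omega⟩
      · intro i hsi hij
        rcases i with _ | i'
        · omega
        · refine isQueue_mono ?_ (hQ i' (by omega) (by omega))
          intro e' he'
          obtain ⟨hm, hp⟩ := he'
          have hc : e' ∉ C := by
            intro h; simp [h] at hp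
          simp only [hc, if_false] at hp
          exact ⟨Finset.mem_sdiff.mpr ⟨hm, hc⟩, by omega⟩

/-- For every graph `G` with `m` edges and every fixed linear order of its
vertices (given by an injection `f : V → ℕ`), the edge set of `G` can be partitioned into
`k ≤ ⌊√(2m)⌋` pages, each a stack or a queue w.r.t. that order; in particular the mixed
page number of `G` is at most `⌊√(2m)⌋`. -/
theorem mixedPageNumber_le_sqrt_two_mul_edges {V : Type*} [Fintype V]
    (G : SimpleGraph V) (f : V → ℕ) (hf : Function.Injective f) :
    (∃ k ≤ Nat.sqrt (2 * G.edgeSet.ncard), ∃ s q : ℕ, s + q = k ∧ MixedLayoutOn G f s q) ∧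
      mixedPageNumber G ≤ Nat.sqrt (2 * G.edgeSet.ncard) := by
  classical
  set m := G.edgeSet.ncard with hm
  set k := Nat.sqrt (2 * m) with hk
  have hcard : G.edgeFinset.card = m := by
    rw [hm, SimpleGraph.edgeFinset, Set.ncard_eq_toFinset_card']
  have hlt : 2 * G.edgeFinset.card < (k + 1) * (k + 1) := by
    have h := Nat.lt_succ_sqrt' (2 * m)
    rw [pow_two, Nat.succ_eq_add_one] at h
    rw [hcard, hk]
    exact h
  obtain ⟨s, q, hsq, P, hP, hS, hQ⟩ := claim f k G.edgeFinset hlt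
  have hset : ∀ i : ℕ,
      {e | e ∈ G.edgeSet ∧ P e = i} = {e | e ∈ G.edgeFinset ∧ P e = i} := by
    intro i
    ext e
    simp [SimpleGraph.mem_edgeFinset]
  have hlayout : MixedLayoutOn G f s q := by
    refine ⟨P, ?_, ?_, ?_⟩
    · intro e he
      rw [hsq]
      exact hP e (SimpleGraph.mem_edgeFinset.mpr he)
    · intro i hi
      rw [hset i]
      exact hS i hi
    · intro i h1 h2
      rw [hset i]
      exact hQ i h1 (by omega)
  constructor
  · exact ⟨k, le_rfl, s, q, hsq, hlayout⟩
  · exact Nat.sInf_le ⟨s, q, hsq, f, hf, hlayout⟩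

end MixedPaper
end

section
/- Let π be a permutation of {0,…,n−1}. Consider the graph on vertex set {0,…,2n−1} with the natural order whose edges are e_j = {π(j), n+j} for j = 0,…,n−1. Then for any set J ⊆ {0,…,n−1} of edge indices: the edges {e_j : j ∈ J} form a stack with respect to the natural order if and only if π is strictly decreasing on J, and they form a queue if and only if π is strictly increasing on J. Consequently, this graph's edges can be partitioned into s stacks and q queues with respect to the natural order if and only if the sequence π(0),…,π(n−1) can be partitioned into s decreasing and q increasing subsequences. -/
namespace MixedPaper

variable {V : Type*}

/-! Every left endpoint `π j < n` precedes every right endpoint `n + j`, and the right endpoints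
are ordered like the indices. Hence for `j < k` the edges `e_j`, `e_k` cross iff `π j < π k` and
nest iff `π k < π j`: no crossing means `π` decreases, no nesting means it increases. -/

section SeparatedEdges

variable {ι : Type*} {a b : ι → ℕ}

theorem cross_id_mk_iff {u v x y : ℕ} (huv : u < v) (hxy : x < y) :
    Cross id s(u, v) s(x, y) ↔ u < x ∧ x < v ∧ v < y := by
  constructor
  · rintro ⟨a, b, c, d, h₁, h₂, hac, hcb, hbd⟩
    rw [Sym2.eq_iff] at h₁ h₂
    simp only [id] at hac hcb hbd
    rcases h₁ with ⟨rfl, rfl⟩ | ⟨rfl, rfl⟩ <;> rcases h₂ with ⟨rfl, rfl⟩ | ⟨rfl, rfl⟩ <;> omega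
  · rintro ⟨hux, hxv, hvy⟩
    exact ⟨u, v, x, y, rfl, rfl, hux, hxv, hvy⟩

theorem nest_id_mk_iff {u v x y : ℕ} (huv : u < v) (hxy : x < y) :
    Nest id s(u, v) s(x, y) ↔ u < x ∧ y < v := by
  constructor
  · rintro ⟨a, b, c, d, h₁, h₂, hac, hcd, hdb⟩
    rw [Sym2.eq_iff] at h₁ h₂
    simp only [id] at hac hcd hdb
    rcases h₁ with ⟨rfl, rfl⟩ | ⟨rfl, rfl⟩ <;> rcases h₂ with ⟨rfl, rfl⟩ | ⟨rfl, rfl⟩ <;> omega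
  · rintro ⟨hux, hyv⟩
    exact ⟨u, v, x, y, rfl, rfl, hux, hxy, hyv⟩

theorem cross_separated_iff (hab : ∀ i j, a i < b j) (i j : ι) :
    Cross id s(a i, b i) s(a j, b j) ↔ a i < a j ∧ b i < b j := by
  rw [cross_id_mk_iff (hab i i) (hab j j)]
  exact ⟨fun ⟨h₁, _, h₃⟩ => ⟨h₁, h₃⟩, fun ⟨h₁, h₃⟩ => ⟨h₁, hab j i, h₃⟩⟩

theorem nest_separated_iff (hab : ∀ i j, a i < b j) (i j : ι) :
    Nest id s(a i, b i) s(a j, b j) ↔ a i < a j ∧ b j < b i :=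
  nest_id_mk_iff (hab i i) (hab j j)

variable [LinearOrder ι]

theorem isStack_separated_iff_strictAntiOn (hab : ∀ i j, a i < b j) (ha : Function.Injective a)
    (hb : StrictMono b) (J : Set ι) :
    IsStack id {e | ∃ j ∈ J, e = s(a j, b j)} ↔ StrictAntiOn a J := by
  constructor
  · intro hstack j hj k hk hjk
    refine (ha.ne hjk.ne).lt_or_gt.resolve_left fun hlt => ?_
    exact hstack _ ⟨j, hj, rfl⟩ _ ⟨k, hk, rfl⟩ ((cross_separated_iff hab j k).2 ⟨hlt, hb hjk⟩)
  · rintro hanti _ ⟨j, hj, rfl⟩ _ ⟨k, hk, rfl⟩ hcross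
    obtain ⟨hajk, hbjk⟩ := (cross_separated_iff hab j k).1 hcross
    exact (hanti hj hk (hb.lt_iff_lt.1 hbjk)).asymm hajk

theorem isQueue_separated_iff_strictMonoOn (hab : ∀ i j, a i < b j) (ha : Function.Injective a)
    (hb : StrictMono b) (J : Set ι) :
    IsQueue id {e | ∃ j ∈ J, e = s(a j, b j)} ↔ StrictMonoOn a J := by
  constructor
  · intro hqueue j hj k hk hjk
    refine (ha.ne hjk.ne).lt_or_gt.resolve_right fun hlt => ?_
    exact hqueue _ ⟨k, hk, rfl⟩ _ ⟨j, hj, rfl⟩ ((nest_separated_iff hab k j).2 ⟨hlt, hb hjk⟩)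
  · rintro hmono _ ⟨j, hj, rfl⟩ _ ⟨k, hk, rfl⟩ hnest
    obtain ⟨hajk, hbkj⟩ := (nest_separated_iff hab j k).1 hnest
    exact (hmono hk hj (hb.lt_iff_lt.1 hbkj)).asymm hajk

end SeparatedEdges

/-- For a permutation `π` of `{0,…,n-1}`, consider the matching on the
vertex set `ℕ` (with its natural order) with edges `e_j = {π(j), n + j}`, `j = 0,…,n-1`.
For every index set `J`, the edges `{e_j : j ∈ J}` form a stack iff `π` is strictly
decreasing on `J`, and a queue iff `π` is strictly increasing on `J`. Consequently, the
edges can be partitioned into `s` stacks and `q` queues w.r.t. the natural order iff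
`π(0),…,π(n-1)` can be partitioned into `s` decreasing and `q` increasing subsequences. -/
theorem matching_stack_queue_iff_monotone (n : ℕ) (π : Equiv.Perm (Fin n)) :
    (∀ J : Set (Fin n),
      (IsStack (id : ℕ → ℕ) {e | ∃ j ∈ J, e = s(((π j : ℕ)), n + (j : ℕ))} ↔
        StrictAntiOn (fun j : Fin n => (π j : ℕ)) J) ∧
      (IsQueue (id : ℕ → ℕ) {e | ∃ j ∈ J, e = s(((π j : ℕ)), n + (j : ℕ))} ↔
        StrictMonoOn (fun j : Fin n => (π j : ℕ)) J)) ∧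
    (∀ s q : ℕ,
      (∃ c : Fin n → ℕ, (∀ j, c j < s + q) ∧
        (∀ i < s,
          IsStack (id : ℕ → ℕ) {e | ∃ j : Fin n, c j = i ∧ e = s(((π j : ℕ)), n + (j : ℕ))}) ∧
        (∀ i, s ≤ i → i < s + q →
          IsQueue (id : ℕ → ℕ) {e | ∃ j : Fin n, c j = i ∧ e = s(((π j : ℕ)), n + (j : ℕ))}))
      ↔
      (∃ c : Fin n → ℕ, (∀ j, c j < s + q) ∧
        (∀ i < s, StrictAntiOn (fun j : Fin n => (π j : ℕ)) {j | c j = i}) ∧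
        (∀ i, s ≤ i → i < s + q →
          StrictMonoOn (fun j : Fin n => (π j : ℕ)) {j | c j = i}))) := by
  have hab : ∀ i j : Fin n, (π i : ℕ) < n + j := fun i _ => by omega
  have ha : Function.Injective fun j : Fin n => (π j : ℕ) := Fin.val_injective.comp π.injective
  have hb : StrictMono fun j : Fin n => n + (j : ℕ) := fun _ _ h => Nat.add_lt_add_left h n
  have stack := isStack_separated_iff_strictAntiOn hab ha hb
  have queue := isQueue_separated_iff_strictMonoOn hab ha hb
  exact ⟨fun J => ⟨stack J, queue J⟩, fun s q => exists_congr fun c => and_congr_right fun _ =>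
    and_congr (forall₂_congr fun i _ => stack {j | c j = i})
      (forall_congr' fun i => imp_congr_right fun _ => imp_congr_right fun _ => queue _)⟩

end MixedPaper
end

section
/- The mixed page number of the complete graph K_n on n vertices is at least ⌈3(n−4)/8⌉. -/
namespace MixedPaper

variable {V : Type*}

/-!
Number the vertices `0, …, n - 1` in layout order and consider the pairs `i + 2 ≤ j` whose sum
`i + j` lies within `r` of `n - 1`; there are at least `((2r + 1)(n - 2) - r(r + 1)) / 2` of them.
Two such pairs with equal sums nest, so a queue holds at most `2r + 1` of them, and a stack at most
`n - 2` (the diagonals of a triangulated `n`-gon and the pair `{0, n - 1}`). Taking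
`r = n - 2 - 2q` gives `2s(n - 2) ≥ r²`, hence `8(s + q)(n - 2) ≥ 3(n - 2)² + (r - 2q)²`.
-/

open Finset

theorem card_le_of_noncrossing {n : ℕ} {S : Finset (ℕ × ℕ)}
    (hS : ∀ p ∈ S, p.1 + 2 ≤ p.2 ∧ p.2 < n)
    (hcross : ∀ p ∈ S, ∀ r ∈ S, ¬ (p.1 < r.1 ∧ r.1 < p.2 ∧ p.2 < r.2)) :
    #S ≤ n - 2 := by
  -- `φ p` lies strictly between the ends of `p`, and two pairs with the same `φ` would cross.
  set φ : ℕ × ℕ → ℕ := fun p => max (p.1 + 1) ({r ∈ S | r.1 = p.1 ∧ r.2 < p.2}.sup Prod.snd)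
  have le_φ : ∀ p, p.1 + 1 ≤ φ p := fun p => le_max_left _ _
  have φ_lt : ∀ p ∈ S, φ p < p.2 := fun p hp => max_lt (by linarith [hS p hp]) <|
    (Finset.sup_lt_iff (by rw [bot_eq_zero]; linarith [hS p hp])).2 fun r hr =>
      (mem_filter.1 hr).2.2
  have snd_le_φ : ∀ p r, r ∈ S → r.1 = p.1 → r.2 < p.2 → r.2 ≤ φ p := fun p r hr h₁ h₂ =>
    le_max_of_le_right (le_sup (f := Prod.snd) (mem_filter.2 ⟨hr, h₁, h₂⟩))
  have φ_mem : ∀ p, p.1 + 1 < φ p → ∃ r ∈ S, r.1 = p.1 ∧ r.2 = φ p := by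
    intro p h
    obtain hE | hne := {r ∈ S | r.1 = p.1 ∧ r.2 < p.2}.eq_empty_or_nonempty
    · simp [φ, hE] at h
    obtain ⟨r, hr, hsup⟩ := exists_mem_eq_sup _ hne Prod.snd
    refine ⟨r, (mem_filter.1 hr).1, (mem_filter.1 hr).2.1, ?_⟩
    simp only [φ, hsup] at h ⊢
    omega
  have not_lexLt_of_φ_eq :
      ∀ p ∈ S, ∀ p' ∈ S, φ p = φ p' → ¬ (p.1 < p'.1 ∨ p.1 = p'.1 ∧ p.2 < p'.2) := by
    rintro p hp p' hp' h (h₁ | ⟨h₁, h₂⟩)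
    · obtain ⟨r, hr, hr₁, hr₂⟩ := φ_mem p (by linarith [le_φ p'])
      exact hcross r hr p' hp' ⟨by omega, by linarith [le_φ p'], by linarith [φ_lt p' hp']⟩
    · linarith [snd_le_φ p' p hp h₁ h₂, φ_lt p hp]
  calc #S ≤ #(Icc 1 (n - 2)) := card_le_card_of_injOn φ
        (fun p hp => by
          have := hS p hp; have := φ_lt p hp; have := le_φ p
          simp only [coe_Icc, Set.mem_Icc]; omega)
        (fun p hp p' hp' h => by
          have h₁ := not_lexLt_of_φ_eq p hp p' hp' h
          have h₂ := not_lexLt_of_φ_eq p' hp' p hp h.symm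
          ext <;> omega)
    _ = n - 2 := by simp

theorem card_le_of_nonnesting {S : Finset (ℕ × ℕ)} {W : Finset ℕ}
    (hS : ∀ p ∈ S, p.1 + p.2 ∈ W) (hnest : ∀ p ∈ S, ∀ r ∈ S, ¬ (p.1 < r.1 ∧ r.2 < p.2)) :
    #S ≤ #W :=
  card_le_card_of_injOn (fun p => p.1 + p.2) hS fun p hp r hr h => by
    have := hnest p hp r hr
    have := hnest r hr p hp
    simp only at h
    ext <;> omega

theorem card_le_of_pages {α : Type*} {S : Finset α} {c : α → ℕ} {s q a b : ℕ}
    (hc : ∀ x ∈ S, c x < s + q) (hstack : ∀ i < s, #{x ∈ S | c x = i} ≤ a)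
    (hqueue : ∀ i, s ≤ i → i < s + q → #{x ∈ S | c x = i} ≤ b) :
    #S ≤ s * a + q * b := by
  rw [card_eq_sum_card_fiberwise (t := range (s + q)) fun x hx => mem_range.2 (hc x hx),
    ← sum_range_add_sum_Ico _ (Nat.le_add_right s q)]
  gcongr
  · simpa using sum_le_card_nsmul _ _ a fun i hi => hstack i (mem_range.1 hi)
  · simpa using sum_le_card_nsmul _ _ b fun i hi => hqueue i (mem_Ico.1 hi).1 (mem_Ico.1 hi).2

def longPairs (n : ℕ) : Finset (ℕ × ℕ) := {p ∈ range n ×ˢ range n | p.1 + 2 ≤ p.2}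

@[simp]
theorem mem_longPairs {n : ℕ} {p : ℕ × ℕ} : p ∈ longPairs n ↔ p.1 + 2 ≤ p.2 ∧ p.2 < n := by
  simp only [longPairs, mem_filter, mem_product, mem_range]
  omega

theorem le_card_longPairs_sum_eq (n σ : ℕ) :
    σ / 2 - (σ + 1 - n) ≤ #{p ∈ longPairs n | p.1 + p.2 = σ} := by
  calc σ / 2 - (σ + 1 - n) = #((Ico (σ + 1 - n) (σ / 2)).image fun a => (a, σ - a)) := by
        rw [card_image_of_injective _ fun a b h => congrArg Prod.fst h, Nat.card_Ico]
    _ ≤ _ := card_le_card fun p hp => by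
        obtain ⟨a, ha, rfl⟩ := mem_image.1 hp
        simp only [mem_Ico] at ha
        simp only [mem_filter, mem_longPairs]
        omega

def centralPairs (n r : ℕ) : Finset (ℕ × ℕ) :=
  {p ∈ longPairs n | n - 1 ≤ p.1 + p.2 + r ∧ p.1 + p.2 ≤ n - 1 + r}

theorem mem_centralPairs {n r : ℕ} {p : ℕ × ℕ} :
    p ∈ centralPairs n r ↔
      p.1 + 2 ≤ p.2 ∧ p.2 < n ∧ n - 1 ≤ p.1 + p.2 + r ∧ p.1 + p.2 ≤ n - 1 + r := by
  simp only [centralPairs, mem_filter, mem_longPairs, and_assoc]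

theorem le_card_centralPairs {n r : ℕ} (hr : r < n) :
    (2 * r + 1) * (n - 2) ≤ 2 * #(centralPairs n r) + r * (r + 1) := by
  induction r with
  | zero =>
    have hsub : {p ∈ longPairs n | p.1 + p.2 = n - 1} ⊆ centralPairs n 0 := fun p hp => by
      simp only [mem_filter, mem_longPairs, mem_centralPairs] at hp ⊢
      omega
    have := (le_card_longPairs_sum_eq n (n - 1)).trans (card_le_card hsub)
    omega
  | succ r ih =>
    set A := {p ∈ longPairs n | p.1 + p.2 = n + r}
    set B := {p ∈ longPairs n | p.1 + p.2 = n - 2 - r}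
    have hA : _ ≤ #A := le_card_longPairs_sum_eq n (n + r)
    have hB : _ ≤ #B := le_card_longPairs_sum_eq n (n - 2 - r)
    have hsub : centralPairs n r ∪ (A ∪ B) ⊆ centralPairs n (r + 1) := fun p hp => by
      simp only [A, B, mem_union, mem_filter, mem_longPairs, mem_centralPairs] at hp ⊢
      omega
    have hAB : Disjoint A B := disjoint_filter.2 fun p _ h₁ h₂ => by omega
    have hCAB : Disjoint (centralPairs n r) (A ∪ B) :=
      disjoint_union_right.2 ⟨disjoint_filter.2 fun p _ h₁ h₂ => by omega,
        disjoint_filter.2 fun p _ h₁ h₂ => by omega⟩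
    have hcard := card_le_card hsub
    rw [card_union_of_disjoint hCAB, card_union_of_disjoint hAB] at hcard
    have := ih (by omega)
    have : (2 * (r + 1) + 1) * (n - 2) = (2 * r + 1) * (n - 2) + 2 * (n - 2) := by ring
    have : (r + 1) * (r + 1 + 1) = r * (r + 1) + 2 * (r + 1) := by ring
    omega

theorem three_mul_le_eight_mul_of_pages {n s q : ℕ} (c : ℕ × ℕ → ℕ)
    (hc : ∀ p ∈ longPairs n, c p < s + q)
    (hstack : ∀ p ∈ longPairs n, ∀ r ∈ longPairs n,
      p.1 < r.1 → r.1 < p.2 → p.2 < r.2 → c p = c r → s ≤ c p)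
    (hqueue : ∀ p ∈ longPairs n, ∀ r ∈ longPairs n, p.1 < r.1 → r.2 < p.2 → c p = c r → c p < s) :
    3 * (n - 2) ≤ 8 * (s + q) := by
  by_cases htriv : n - 2 < 2 * q ∨ n ≤ 2
  · omega
  set r := n - 2 - 2 * q
  have hcentral := le_card_centralPairs (n := n) (r := r) (by omega)
  have long_of_mem {i : ℕ} {p : ℕ × ℕ} (hp : p ∈ {x ∈ centralPairs n r | c x = i}) :
      p ∈ longPairs n ∧ c p = i := ⟨(mem_filter.1 (mem_filter.1 hp).1).1, (mem_filter.1 hp).2⟩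
  have hpages : #(centralPairs n r) ≤ s * (n - 2) + q * (2 * r + 1) := by
    refine card_le_of_pages (c := c) (fun p hp => hc p (mem_filter.1 hp).1)
      (fun i hi => card_le_of_noncrossing (fun p hp => mem_longPairs.1 (long_of_mem hp).1) ?_)
      (fun i hi _ => ?_)
    · rintro p hp p' hp' ⟨h₁, h₂, h₃⟩
      obtain ⟨hpl, rfl⟩ := long_of_mem hp
      obtain ⟨hpl', hpp'⟩ := long_of_mem hp'
      exact (hstack p hpl p' hpl' h₁ h₂ h₃ hpp'.symm).not_gt hi
    · calc _ ≤ #(Icc (n - 1 - r) (n - 1 + r)) := card_le_of_nonnesting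
            (fun p hp => by
              have := mem_centralPairs.1 (mem_filter.1 hp).1
              rw [mem_Icc]
              omega)
            (by
              rintro p hp p' hp' ⟨h₁, h₂⟩
              obtain ⟨hpl, rfl⟩ := long_of_mem hp
              obtain ⟨hpl', hpp'⟩ := long_of_mem hp'
              exact (hqueue p hpl p' hpl' h₁ h₂ hpp'.symm).not_ge hi)
        _ = 2 * r + 1 := by simp only [Nat.card_Icc]; omega
  have hm : n - 2 = r + 2 * q := by omega
  rw [hm] at hcentral hpages ⊢
  nlinarith [sq_nonneg ((r : ℤ) - 2 * q)]

theorem not_cross_self (f : V → ℕ) (e : Sym2 V) : ¬ Cross f e e := by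
  rintro ⟨a, b, c, d, rfl, h, hac, hcb, -⟩
  rcases Sym2.eq_iff.1 h with ⟨rfl, rfl⟩ | ⟨rfl, rfl⟩ <;> omega

theorem hasMixedLayout_natCard_sym2 [Finite V] (G : SimpleGraph V) :
    HasMixedLayout G (Nat.card (Sym2 V)) 0 := by
  refine ⟨fun v => Finite.equivFin V v, Fin.val_injective.comp (Finite.equivFin V).injective,
    fun e => Finite.equivFin (Sym2 V) e, fun e _ => Fin.is_lt _, ?_, fun i h₁ h₂ => by omega⟩
  rintro i - e₁ ⟨-, h₁⟩ e₂ ⟨-, h₂⟩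
  obtain rfl : e₁ = e₂ := (Finite.equivFin (Sym2 V)).injective (Fin.ext (h₁.trans h₂.symm))
  exact not_cross_self _ e₁

theorem le_mixedPageNumber [Finite V] {G : SimpleGraph V} {m : ℕ}
    (h : ∀ s q, HasMixedLayout G s q → m ≤ s + q) : m ≤ mixedPageNumber G := by
  obtain ⟨s, q, hsq, hlayout⟩ := Nat.sInf_mem (s := {k | ∃ s q, s + q = k ∧ HasMixedLayout G s q})
    ⟨_, _, 0, rfl, hasMixedLayout_natCard_sym2 G⟩
  rw [mixedPageNumber, ← hsq]
  exact h s q hlayout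

theorem MixedLayoutOn.three_mul_le_eight_mul {G : SimpleGraph V} {f : V → ℕ} {s q : ℕ}
    (h : MixedLayoutOn G f s q) {n : ℕ} (v : ℕ → V) (hv : StrictMonoOn (f ∘ v) (Set.Iio n))
    (hadj : ∀ i j, i < j → j < n → G.Adj (v i) (v j)) :
    3 * (n - 2) ≤ 8 * (s + q) := by
  obtain ⟨P, hP, hstack, hqueue⟩ := h
  have f_lt {i j : ℕ} (hij : i < j) (hj : j < n) : f (v i) < f (v j) :=
    hv (Set.mem_Iio.2 (hij.trans hj)) (Set.mem_Iio.2 hj) hij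
  have hedge : ∀ p ∈ longPairs n, s(v p.1, v p.2) ∈ G.edgeSet := fun p hp =>
    hadj _ _ (by linarith [mem_longPairs.1 hp]) (mem_longPairs.1 hp).2
  refine three_mul_le_eight_mul_of_pages (fun p => P s(v p.1, v p.2))
    (fun p hp => hP _ (hedge p hp)) (fun p hp r hr h₁ h₂ h₃ hpr => ?_)
    (fun p hp r hr h₁ h₂ hpr => ?_)
  · have := mem_longPairs.1 hr
    by_contra! hlt
    exact hstack _ hlt _ ⟨hedge p hp, rfl⟩ _ ⟨hedge r hr, hpr.symm⟩
      ⟨_, _, _, _, rfl, rfl, f_lt h₁ (by omega), f_lt h₂ (by omega), f_lt h₃ this.2⟩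
  · have := mem_longPairs.1 hp
    have := mem_longPairs.1 hr
    by_contra! hle
    exact hqueue _ hle (hP _ (hedge p hp)) _ ⟨hedge p hp, rfl⟩ _ ⟨hedge r hr, hpr.symm⟩
      ⟨_, _, _, _, rfl, rfl, f_lt h₁ (by omega), f_lt (by omega) (by omega),
        f_lt h₂ (by omega)⟩

theorem exists_strictMonoOn_comp_of_injective {n : ℕ} (hn : 0 < n) {f : Fin n → ℕ}
    (hf : Function.Injective f) : ∃ v : ℕ → Fin n, StrictMonoOn (f ∘ v) (Set.Iio n) := by
  have hmono := (Tuple.monotone_sort f).strictMono_of_injective (hf.comp (Tuple.sort f).injective)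
  refine ⟨fun i => Tuple.sort f ⟨i % n, Nat.mod_lt _ hn⟩, fun i hi j hj hij => hmono ?_⟩
  rw [Fin.mk_lt_mk, Nat.mod_eq_of_lt hi, Nat.mod_eq_of_lt hj]
  exact hij

/-- The mixed page number of the complete graph `K_n` is at least
`⌈3(n−4)/8⌉` (which, in natural-number arithmetic, is `(3*(n-4) + 7) / 8`). -/
theorem mixedPageNumber_completeGraph_lower (n : ℕ) :
    (3 * (n - 4) + 7) / 8 ≤ mixedPageNumber (SimpleGraph.completeGraph (Fin n)) := by
  refine le_mixedPageNumber fun s q ⟨f, hf, hlayout⟩ => ?_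
  rcases n.eq_zero_or_pos with rfl | hn
  · omega
  obtain ⟨v, hv⟩ := exists_strictMonoOn_comp_of_injective hn hf
  have := hlayout.three_mul_le_eight_mul v hv fun i j hij hj =>
    (hv (Set.mem_Iio.2 (hij.trans hj)) (Set.mem_Iio.2 hj) hij).ne ∘ congrArg f
  omega

end MixedPaper
end

section
/- Let n ≥ 1 and q ≤ n. Any subset of the grid H_n = {0,…,n−1} × {0,…,n−1} that is a union of q queue-paths has at most Σ_{i=0}^{q−1}(2n − 1 − 2i) = 2nq − q² points, and this bound is attained: there exist q pairwise disjoint queue-paths in H_n whose union has exactly 2nq − q² points. -/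
namespace MixedPaper

/-- A queue-path: any two of its points are comparable in the componentwise order. -/
def IsQueuePath (P : Set (ℤ × ℤ)) : Prop :=
  ∀ p ∈ P, ∀ p' ∈ P, (p.1 ≤ p'.1 ∧ p.2 ≤ p'.2) ∨ (p'.1 ≤ p.1 ∧ p'.2 ≤ p.2)

/-- A stack-path: any two of its points are comparable in the order that is
increasing in the first and decreasing in the second coordinate. -/
def IsStackPath (P : Set (ℤ × ℤ)) : Prop :=
  ∀ p ∈ P, ∀ p' ∈ P, (p.1 ≤ p'.1 ∧ p'.2 ≤ p.2) ∨ (p'.1 ≤ p.1 ∧ p.2 ≤ p'.2)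

/-- The grid `H_n = {0,…,n-1} × {0,…,n-1} ⊆ ℤ²`. -/
def gridH (n : ℕ) : Set (ℤ × ℤ) :=
  {p | 0 ≤ p.1 ∧ p.1 < n ∧ 0 ≤ p.2 ∧ p.2 < n}

/-!
An antidiagonal `x + y = s` is an antichain, so a queue-path meets it at most once: a union of
`q` queue-paths has at most `q` points on it, and of course at most as many as the grid has there.
The hooks `min x (n - 1 - y) = i` for `i < q` are `q` disjoint queue-paths whose union contains
exactly that many points of each antidiagonal (its leftmost ones). Summing over antidiagonals, the
union of the hooks is the extremal configuration, and its complement in the grid is an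
`(n - q) × (n - q)` square, so it has `n² - (n - q)² = 2nq - q²` points.
-/

theorem IsQueuePath.injOn_add {P : Set (ℤ × ℤ)} (hP : IsQueuePath P) :
    Set.InjOn (fun p : ℤ × ℤ => p.1 + p.2) P := by
  intro a ha b hb (hab : a.1 + a.2 = b.1 + b.2)
  rcases hP a ha b hb with h | h <;> exact Prod.ext (by omega) (by omega)

theorem ncard_iUnion_inter_preimage_le {α β ι : Type*} [Finite ι] {f : α → β}
    {Q : ι → Set α} (hQ : ∀ i, Set.InjOn f (Q i)) (b : β) :
    ((⋃ i, Q i) ∩ f ⁻¹' {b}).ncard ≤ Nat.card ι := by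
  rw [← Nat.card_coe_set_eq]
  choose idx hidx using fun a : ↥((⋃ i, Q i) ∩ f ⁻¹' {b}) => Set.mem_iUnion.mp a.2.1
  exact Nat.card_le_card_of_injective idx fun a a' h =>
    Subtype.ext (hQ _ (hidx a) (h ▸ hidx a') (a.2.2.trans a'.2.2.symm))

noncomputable def gridFinset (n : ℕ) : Finset (ℤ × ℤ) :=
  Finset.Ico 0 (n : ℤ) ×ˢ Finset.Ico 0 (n : ℤ)

theorem mem_gridFinset {n : ℕ} {p : ℤ × ℤ} :
    p ∈ gridFinset n ↔ 0 ≤ p.1 ∧ p.1 < n ∧ 0 ≤ p.2 ∧ p.2 < n := by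
  simp [gridFinset, and_assoc]

theorem coe_gridFinset (n : ℕ) : (gridFinset n : Set (ℤ × ℤ)) = gridH n :=
  Set.ext fun _ => mem_gridFinset

theorem card_gridFinset (n : ℕ) : (gridFinset n).card = n * n := by
  simp [gridFinset]

/-- `hookIndex n p = i` on the hook `{x = i, y ≤ n - 1 - i} ∪ {x ≥ i, y = n - 1 - i}`. -/
def hookIndex (n : ℕ) (p : ℤ × ℤ) : ℤ :=
  min p.1 (n - 1 - p.2)

noncomputable def hook (n : ℕ) (i : ℤ) : Finset (ℤ × ℤ) :=
  (gridFinset n).filter fun p => hookIndex n p = i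

noncomputable def hookUnion (n q : ℕ) : Finset (ℤ × ℤ) :=
  (gridFinset n).filter fun p => hookIndex n p < q

theorem mem_hook {n : ℕ} {i : ℤ} {p : ℤ × ℤ} :
    p ∈ hook n i ↔ p ∈ gridFinset n ∧ hookIndex n p = i :=
  Finset.mem_filter

theorem mem_hookUnion {n q : ℕ} {p : ℤ × ℤ} :
    p ∈ hookUnion n q ↔ p ∈ gridFinset n ∧ hookIndex n p < q :=
  Finset.mem_filter

theorem isQueuePath_hook (n : ℕ) (i : ℤ) : IsQueuePath (hook n i : Set (ℤ × ℤ)) := by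
  intro p hp p' hp'
  rw [Finset.mem_coe, mem_hook] at hp hp'
  simp only [hookIndex] at hp hp'
  omega

theorem card_hookUnion {n q : ℕ} (hq : q ≤ n) :
    ((hookUnion n q).card : ℤ) = 2 * n * q - q ^ 2 := by
  have hcompl : (gridFinset n).filter (fun p => ¬ hookIndex n p < q) =
      Finset.Ico (q : ℤ) n ×ˢ Finset.Ico 0 ((n : ℤ) - q) := by
    ext p
    rw [Finset.mem_filter, mem_gridFinset, Finset.mem_product, Finset.mem_Ico, Finset.mem_Ico,
      hookIndex]
    omega
  have hsplit := Finset.card_filter_add_card_filter_not (s := gridFinset n)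
    (p := fun p => hookIndex n p < q)
  rw [hcompl, Finset.card_product, Int.card_Ico, Int.card_Ico, card_gridFinset, sub_zero] at hsplit
  have hdiff : (((n : ℤ) - q).toNat : ℤ) = n - q := Int.toNat_of_nonneg (by omega)
  rw [hookUnion]
  zify at hsplit
  rw [hdiff] at hsplit
  linear_combination hsplit

theorem card_le_card_hookUnion_antidiagonal {n q : ℕ} {s : ℤ} {A : Finset (ℤ × ℤ)}
    (hA : A ⊆ gridFinset n) (hAs : ∀ p ∈ A, p.1 + p.2 = s) (hAq : A.card ≤ q) :
    A.card ≤ ((hookUnion n q).filter fun p => p.1 + p.2 = s).card := by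
  set lo := max 0 (s - (n - 1))
  set hi := min s ((n : ℤ) - 1)
  -- on the antidiagonal `s` of the grid, `hookIndex n p = p.1 - lo`
  have hdiag : ((hookUnion n q).filter fun p => p.1 + p.2 = s) =
      (Finset.Icc lo (min hi (lo + q - 1))).image fun x => (x, s - x) := by
    ext p
    simp only [Finset.mem_filter, mem_hookUnion, mem_gridFinset, Finset.mem_image,
      Finset.mem_Icc, hookIndex]
    constructor
    · rintro ⟨⟨hp, hidx⟩, hps⟩
      exact ⟨p.1, by omega, Prod.ext rfl (by simp only; omega)⟩
    · rintro ⟨x, hx, rfl⟩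
      simp only
      omega
  have hfst : A.card ≤ (Finset.Icc lo hi).card := by
    refine Finset.card_le_card_of_injOn Prod.fst (fun p hp => ?_) (fun p hp p' hp' h => ?_)
    · have := mem_gridFinset.1 (hA hp)
      have := hAs p hp
      simp only [Finset.coe_Icc, Set.mem_Icc]
      omega
    · have := hAs p hp
      have := hAs p' hp'
      exact Prod.ext h (by omega)
  rw [hdiag, Finset.card_image_of_injective _ fun x y h => (Prod.ext_iff.1 h).1, Int.card_Icc]
  rw [Int.card_Icc] at hfst
  omega

theorem ncard_iUnion_le_card_hookUnion {n : ℕ} {ι : Type*} [Finite ι] (Q : ι → Set (ℤ × ℤ))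
    (hQ : ∀ i, IsQueuePath (Q i)) (hsub : (⋃ i, Q i) ⊆ gridH n) :
    (⋃ i, Q i).ncard ≤ (hookUnion n (Nat.card ι)).card := by
  classical
  rw [← coe_gridFinset] at hsub
  obtain ⟨U, hU⟩ := ((gridFinset n).finite_toSet.subset hsub).exists_finset_coe
  have hUgrid : U ⊆ gridFinset n := Finset.coe_subset.1 (hU ▸ hsub)
  have hmaps : ∀ T ⊆ gridFinset n, ∀ p ∈ T, p.1 + p.2 ∈ (gridFinset n).image fun p => p.1 + p.2 :=
    fun T hT p hp => Finset.mem_image_of_mem _ (hT hp)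
  rw [← hU, Set.ncard_coe_finset, Finset.card_eq_sum_card_fiberwise (hmaps U hUgrid),
    Finset.card_eq_sum_card_fiberwise (hmaps (hookUnion n _) (Finset.filter_subset _ _))]
  refine Finset.sum_le_sum fun s _ => card_le_card_hookUnion_antidiagonal
    ((Finset.filter_subset _ _).trans hUgrid) (fun p hp => (Finset.mem_filter.1 hp).2) ?_
  have hfiber : (U.filter fun p => p.1 + p.2 = s : Set (ℤ × ℤ)) =
      (⋃ i, Q i) ∩ (fun p : ℤ × ℤ => p.1 + p.2) ⁻¹' {s} := by
    rw [← hU]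
    ext
    simp
  rw [← Set.ncard_coe_finset, hfiber]
  exact ncard_iUnion_inter_preimage_le (fun i => (hQ i).injOn_add) s

theorem iUnion_hook (n q : ℕ) : (⋃ i : Fin q, (hook n i : Set (ℤ × ℤ))) = hookUnion n q := by
  ext p
  simp only [Set.mem_iUnion, Finset.mem_coe, mem_hook, mem_hookUnion]
  constructor
  · rintro ⟨i, hp, hidx⟩
    exact ⟨hp, hidx ▸ by exact_mod_cast i.2⟩
  · rintro ⟨hp, hlt⟩
    have : 0 ≤ hookIndex n p := by
      rw [mem_gridFinset] at hp
      simp only [hookIndex]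
      omega
    exact ⟨⟨(hookIndex n p).toNat, by omega⟩, hp, by simp only; omega⟩

theorem disjoint_hook (n : ℕ) {i j : ℤ} (h : i ≠ j) :
    Disjoint (hook n i : Set (ℤ × ℤ)) (hook n j) :=
  Finset.disjoint_coe.2 <| Finset.disjoint_filter.2 fun _ _ hi hj => h (hi.symm.trans hj)

theorem queuePaths_cover_bound_general (n q : ℕ) (hq : q ≤ n) :
    (∀ Q : Fin q → Set (ℤ × ℤ), (∀ i, IsQueuePath (Q i)) → (⋃ i, Q i) ⊆ gridH n →
      ((⋃ i, Q i).ncard : ℤ) ≤ 2 * n * q - q ^ 2) ∧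
    (∃ Q : Fin q → Set (ℤ × ℤ), (∀ i, IsQueuePath (Q i)) ∧ (∀ i, Q i ⊆ gridH n) ∧
      (∀ i i' : Fin q, i ≠ i' → Disjoint (Q i) (Q i')) ∧
      ((⋃ i, Q i).ncard : ℤ) = 2 * n * q - q ^ 2) := by
  refine ⟨fun Q hQ hsub => ?_, fun i => hook n i, fun i => isQueuePath_hook n i, fun i => ?_,
    fun i i' h => disjoint_hook n (by exact_mod_cast Fin.val_ne_of_ne h), ?_⟩
  · have hbound := ncard_iUnion_le_card_hookUnion Q hQ hsub
    rw [Nat.card_fin] at hbound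
    rw [← card_hookUnion hq]
    exact_mod_cast hbound
  · rw [← coe_gridFinset]
    exact Finset.coe_subset.2 (Finset.filter_subset _ _)
  · rw [iUnion_hook, Set.ncard_coe_finset, card_hookUnion hq]

/-- For `n ≥ 1` and `q ≤ n`, any subset of the grid `H_n` that is a union
of `q` queue-paths has at most `Σ_{i=0}^{q-1} (2n − 1 − 2i) = 2nq − q²` points, and the
bound is attained by `q` pairwise disjoint queue-paths in `H_n`. -/
theorem queuePaths_cover_bound (n q : ℕ) (hn : 1 ≤ n) (hq : q ≤ n) :
    (∀ Q : Fin q → Set (ℤ × ℤ), (∀ i, IsQueuePath (Q i)) → (⋃ i, Q i) ⊆ gridH n →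
      ((⋃ i, Q i).ncard : ℤ) ≤ 2 * n * q - q ^ 2) ∧
    (∃ Q : Fin q → Set (ℤ × ℤ), (∀ i, IsQueuePath (Q i)) ∧ (∀ i, Q i ⊆ gridH n) ∧
      (∀ i i' : Fin q, i ≠ i' → Disjoint (Q i) (Q i')) ∧
      ((⋃ i, Q i).ncard : ℤ) = 2 * n * q - q ^ 2) :=
  queuePaths_cover_bound_general n q hq

end MixedPaper
end

section
/- For every n divisible by 3, the grid H_n = {0,…,n−1} × {0,…,n−1} can be written as the union of n/3 stack-paths and n/3 queue-paths. -/
namespace MixedPaper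

/-- The `k`-th stack path: a descending "Z"-staircase. -/
def Sset (m k : ℤ) : Set (ℤ × ℤ) :=
  {p | (p.1 = k ∧ m + k ≤ p.2 ∧ p.2 ≤ 3*m - 1) ∨
       (p.2 = m + k ∧ k ≤ p.1 ∧ p.1 ≤ 2*m + k) ∨
       (p.1 = 2*m + k ∧ 0 ≤ p.2 ∧ p.2 ≤ m + k)}

/-- The `k`-th queue path: an ascending staircase with three turns. -/
def Qset (m k : ℤ) : Set (ℤ × ℤ) :=
  {p | (p.1 = k ∧ 0 ≤ p.2 ∧ p.2 ≤ m - 1 - k) ∨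
       (p.2 = m - 1 - k ∧ k ≤ p.1 ∧ p.1 ≤ m + k) ∨
       (p.1 = m + k ∧ m - 1 - k ≤ p.2 ∧ p.2 ≤ 3*m - 1 - k) ∨
       (p.2 = 3*m - 1 - k ∧ m + k ≤ p.1 ∧ p.1 ≤ 3*m - 1)}

lemma isStackPath_Sset (m k : ℤ) (hm : 0 ≤ m) (hk : 0 ≤ k) : IsStackPath (Sset m k) := by
  intro p hp p' hp'
  simp only [Sset, Set.mem_setOf_eq] at hp hp'
  omega

lemma isQueuePath_Qset (m k : ℤ) (hm : 0 ≤ m) (hk : 0 ≤ k) : IsQueuePath (Qset m k) := by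
  intro p hp p' hp'
  simp only [Qset, Set.mem_setOf_eq] at hp hp'
  omega

/-- For every `n` divisible by `3`, the grid `H_n` is the union of
`n/3` stack-paths and `n/3` queue-paths. -/
theorem gridH_cover_of_three_dvd (n : ℕ) (h : 3 ∣ n) :
    ∃ (S Q : Fin (n / 3) → Set (ℤ × ℤ)),
      (∀ i, IsStackPath (S i)) ∧ (∀ i, IsQueuePath (Q i)) ∧
      ((⋃ i, S i) ∪ ⋃ i, Q i) = gridH n := by
  obtain ⟨m, rfl⟩ := h
  refine ⟨fun i => Sset (m : ℤ) ((i : ℕ) : ℤ), fun i => Qset (m : ℤ) ((i : ℕ) : ℤ),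
    fun i => isStackPath_Sset _ _ (by positivity) (by positivity), fun i => isQueuePath_Qset _ _ (by positivity) (by positivity), ?_⟩
  ext p
  simp only [Set.mem_union, Set.mem_iUnion, gridH, Set.mem_setOf_eq]
  constructor
  · rintro (⟨i, hi⟩ | ⟨i, hi⟩)
    · have hb : (i : ℕ) < m := by have := i.isLt; omega
      simp only [Sset, Set.mem_setOf_eq] at hi
      push_cast
      omega
    · have hb : (i : ℕ) < m := by have := i.isLt; omega
      simp only [Qset, Set.mem_setOf_eq] at hi
      push_cast
      omega
  · intro hp
    push_cast at hp
    obtain ⟨hx0, hx1, hy0, hy1⟩ := hp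
    have main : (∃ k : ℕ, k < m ∧ p ∈ Sset (m : ℤ) (k : ℤ)) ∨
        (∃ k : ℕ, k < m ∧ p ∈ Qset (m : ℤ) (k : ℤ)) := by
      simp only [Sset, Qset, Set.mem_setOf_eq]
      by_cases c1 : p.1 < m
      · by_cases c2 : p.2 < m
        · by_cases c3 : p.1 + p.2 ≤ m - 1
          · exact Or.inr ⟨p.1.toNat, by omega, by omega⟩
          · exact Or.inr ⟨(m - 1 - p.2).toNat, by omega, by omega⟩
        · by_cases c3 : m + p.1 ≤ p.2
          · exact Or.inl ⟨p.1.toNat, by omega, by omega⟩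
          · exact Or.inl ⟨(p.2 - m).toNat, by omega, by omega⟩
      · by_cases c2 : p.1 < 2*m
        · by_cases c3 : p.2 < 2*m - 1 - p.1
          · exact Or.inr ⟨(m - 1 - p.2).toNat, by omega, by omega⟩
          · by_cases c4 : p.2 ≤ 4*m - 1 - p.1
            · exact Or.inr ⟨(p.1 - m).toNat, by omega, by omega⟩
            · exact Or.inr ⟨(3*m - 1 - p.2).toNat, by omega, by omega⟩
        · by_cases c3 : p.2 < 2*m
          · by_cases c4 : p.2 ≤ p.1 - m
            · exact Or.inl ⟨(p.1 - 2*m).toNat, by omega, by omega⟩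
            · exact Or.inl ⟨(p.2 - m).toNat, by omega, by omega⟩
          · exact Or.inr ⟨(3*m - 1 - p.2).toNat, by omega, by omega⟩
    rcases main with ⟨k, hk, hmem⟩ | ⟨k, hk, hmem⟩
    · exact Or.inl ⟨⟨k, by omega⟩, hmem⟩
    · exact Or.inr ⟨⟨k, by omega⟩, hmem⟩

end MixedPaper
end

section
/- For every n ≥ 1, the edge set of the complete bipartite graph K_{n,n} can be partitioned into s stacks and q queues with respect to the separated vertex order with s + q = ⌈2n/3⌉. -/
set_option maxHeartbeats 1600000


namespace MixedPaper

variable {V : Type*}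

/-- The separated vertex order on the vertices of `K_{n,n}`:
all of `u_0 ≺ … ≺ u_{n-1}` (the left part) precede `v_0 ≺ … ≺ v_{n-1}` (the right part). -/
def sepOrder (n : ℕ) : Fin n ⊕ Fin n → ℕ :=
  Sum.elim (fun i => (i : ℕ)) (fun j => n + (j : ℕ))

/-- inner page function on the `3k × 3k` grid: stacks `0..k-1`, queues `k..2k-1`. -/
def pgInner (k a b : ℕ) : ℕ :=
  if b < k then
    if a < 2*k then (if a + b < 2*k then k + b else k + (2*k-1-a))
    else a - 2*k
  else if b < 2*k then
    if a < k then (if b - k ≤ a then b - k else a)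
    else if a < 2*k then b - k
    else (if b < a - k then a - 2*k else b - k)
  else if a < k then a
  else (if 4*k ≤ a + b + 1 then k + (b - 2*k) else k + (2*k-1-a))

/-- page of the cell `(i,j)` of the `n × n` grid. -/
def pg (n i j : ℕ) : ℕ :=
  if min i j < n % 3 then min i j
  else n % 3 + pgInner (n / 3) (i - n % 3) (j - n % 3)

lemma pgInner_lt (k a b : ℕ) (ha : a < 3*k) (hb : b < 3*k) : pgInner k a b < 2*k := by
  unfold pgInner; split_ifs <;> omega

lemma pg_lt (n i j : ℕ) (hi : i < n) (hj : j < n) : pg n i j < n % 3 + 2 * (n / 3) := by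
  have h3 : n % 3 < 3 := Nat.mod_lt _ (by norm_num)
  have hd : n % 3 + 3 * (n / 3) = n := by omega
  unfold pg
  split_ifs with h
  · omega
  · have := pgInner_lt (n/3) (i - n % 3) (j - n % 3) (by omega) (by omega)
    omega

lemma pgInner_stack (k a b a' b' : ℕ) (h : pgInner k a b = pgInner k a' b')
    (hp : pgInner k a b < k) (h1 : a < a') (h2 : b < b') : False := by
  unfold pgInner at h hp
  split_ifs at h hp <;> omega

lemma pgInner_queue (k a b a' b' : ℕ) (ha : a < 3*k) (hb : b < 3*k) (ha' : a' < 3*k)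
    (hb' : b' < 3*k) (h : pgInner k a b = pgInner k a' b')
    (hp : k ≤ pgInner k a b) (h1 : a < a') (h2 : b' < b) : False := by
  unfold pgInner at h hp
  split_ifs at h hp <;> omega

lemma pg_stack (n i j i' j' : ℕ) (hi : i < n) (hj : j < n) (hi' : i' < n) (hj' : j' < n)
    (h : pg n i j = pg n i' j') (hp : pg n i j < n % 3 + n / 3)
    (h1 : i < i') (h2 : j < j') : False := by
  have h3 : n % 3 < 3 := Nat.mod_lt _ (by norm_num)
  have hd : n % 3 + 3 * (n / 3) = n := by omega
  unfold pg at h hp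
  split_ifs at h hp with hA hB
  · omega
  · have := pgInner_lt (n/3) (i' - n % 3) (j' - n % 3) (by omega) (by omega)
    omega
  · omega
  · exact pgInner_stack (n/3) (i - n % 3) (j - n % 3) (i' - n % 3) (j' - n % 3)
      (Nat.add_left_cancel h) (by omega) (by omega) (by omega)

lemma pg_queue (n i j i' j' : ℕ) (hi : i < n) (hj : j < n) (hi' : i' < n) (hj' : j' < n)
    (h : pg n i j = pg n i' j') (hp : n % 3 + n / 3 ≤ pg n i j)
    (h1 : i < i') (h2 : j' < j) : False := by
  have h3 : n % 3 < 3 := Nat.mod_lt _ (by norm_num)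
  have hd : n % 3 + 3 * (n / 3) = n := by omega
  unfold pg at h hp
  split_ifs at h hp with hA hB
  · omega
  · omega
  · have := pgInner_lt (n/3) (i - n % 3) (j - n % 3) (by omega) (by omega)
    omega
  · exact pgInner_queue (n/3) (i - n % 3) (j - n % 3) (i' - n % 3) (j' - n % 3)
      (by omega) (by omega) (by omega) (by omega) (Nat.add_left_cancel h) (by omega) (by omega) (by omega)


/-- Page assignment on edges. -/
def pgE (n : ℕ) : Sym2 (Fin n ⊕ Fin n) → ℕ :=
  Sym2.lift ⟨fun x y =>
    match x, y with
    | .inl i, .inr j => pg n i j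
    | .inr j, .inl i => pg n i j
    | _, _ => 0,
   by rintro (i | i) (j | j) <;> rfl⟩

/-- For every `n ≥ 1`, the edge set of `K_{n,n}` can be partitioned into
`s` stacks and `q` queues with respect to the separated vertex order, with
`s + q = ⌈2n/3⌉` (which is `(2n + 2) / 3` in natural-number arithmetic). -/
theorem sep_layout_upper (n : ℕ) (hn : 1 ≤ n) :
    ∃ s q : ℕ, s + q = (2 * n + 2) / 3 ∧
      MixedLayoutOn (completeBipartiteGraph (Fin n) (Fin n)) (sepOrder n) s q := by
  refine ⟨n % 3 + n / 3, n / 3, by omega, pgE n, ?_, ?_, ?_⟩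
  · intro e he
    induction e using Sym2.ind with
    | _ x y =>
      rw [SimpleGraph.mem_edgeSet] at he
      rcases x with i | i <;> rcases y with j | j <;> simp at he
      · have := pg_lt n i j i.isLt j.isLt
        simpa only [pgE, Sym2.lift_mk] using by omega
      · have := pg_lt n j i j.isLt i.isLt
        simpa only [pgE, Sym2.lift_mk] using by omega
  · intro p hp e₁ h₁ e₂ h₂ hc
    obtain ⟨a, b, c, d, he₁, he₂, f1, f2, f3⟩ := hc
    obtain ⟨he₁m, hP₁⟩ := h₁
    obtain ⟨he₂m, hP₂⟩ := h₂
    subst he₁ he₂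
    rw [SimpleGraph.mem_edgeSet] at he₁m he₂m
    simp only [pgE, Sym2.lift_mk] at hP₁ hP₂
    rcases a with i | i <;> rcases b with j | j <;> simp at he₁m <;>
      rcases c with i' | i' <;> rcases d with j' | j' <;> simp at he₂m <;>
      simp only [sepOrder, Sum.elim_inl, Sum.elim_inr] at f1 f2 f3
    · have hq1 : pg n (i : ℕ) (j : ℕ) = p := hP₁
      have hq2 : pg n (i' : ℕ) (j' : ℕ) = p := hP₂
      exact pg_stack n i j i' j' i.isLt j.isLt i'.isLt j'.isLt (hq1.trans hq2.symm)
        (by omega) (by omega) (by omega)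
    · have := i'.isLt; have := j.isLt; omega
    · have := i.isLt; have := j'.isLt; omega
    · have := i.isLt; have := j.isLt; omega
  · intro p hp hp' e₁ h₁ e₂ h₂ hc
    obtain ⟨a, b, c, d, he₁, he₂, f1, f2, f3⟩ := hc
    obtain ⟨he₁m, hP₁⟩ := h₁
    obtain ⟨he₂m, hP₂⟩ := h₂
    subst he₁ he₂
    rw [SimpleGraph.mem_edgeSet] at he₁m he₂m
    simp only [pgE, Sym2.lift_mk] at hP₁ hP₂
    rcases a with i | i <;> rcases b with j | j <;> simp at he₁m <;>
      rcases c with i' | i' <;> rcases d with j' | j' <;> simp at he₂m <;>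
      simp only [sepOrder, Sum.elim_inl, Sum.elim_inr] at f1 f2 f3
    · have hq1 : pg n (i : ℕ) (j : ℕ) = p := hP₁
      have hq2 : pg n (i' : ℕ) (j' : ℕ) = p := hP₂
      exact pg_queue n i j i' j' i.isLt j.isLt i'.isLt j'.isLt (hq1.trans hq2.symm)
        (by omega) (by omega) (by omega)
    · have := i.isLt; have := i'.isLt; have := j'.isLt; omega
    · have := i.isLt; have := j'.isLt; omega
    · have := i.isLt; have := j.isLt; omega

end MixedPaper
end

section
/- Let A and B be disjoint sets with |A| = |B| = n, and let ≺ be any linear order on A ∪ B. Then there exist subsets A' of one of the two parts and B' of the other part with |A'| = |B'| = ⌈n/2⌉ such that every element of A' precedes (in ≺) every element of B'. -/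
/-!
Cut `A ∪ B` into its `n` smallest and its `n` largest elements. If `A` has `a` elements in the
lower half, then `B` has exactly `a` elements in the upper half, and symmetrically `B` has
`n - a` below and `A` has `n - a` above. Since `max a (n - a) ≥ ⌈n/2⌉`, one of these two
pairs of blocks contains the required sets.
-/

namespace MixedPaper

open Finset

section

variable {α β : Type*} [DecidableEq α]

theorem exists_subset_card_eq_forall_lt_of_injOn [LinearOrder β] {f : α → β}
    {S : Finset α} (hf : Set.InjOn f S) {m : ℕ} (hm : m ≤ #S) :
    ∃ L ⊆ S, #L = m ∧ ∀ x ∈ L, ∀ y ∈ S \ L, f x < f y := by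
  induction m with
  | zero => exact ⟨∅, empty_subset S, card_empty, by simp⟩
  | succ m ih =>
    obtain ⟨L, hLS, hLcard, hLsep⟩ := ih (by omega)
    have hne : (S \ L).Nonempty := by
      rw [← card_pos, card_sdiff_of_subset hLS]; omega
    -- adding a minimal element of the complement keeps `L` an initial segment
    obtain ⟨y, hy, hymin⟩ := exists_min_image (S \ L) f hne
    have hyL : y ∉ L := (mem_sdiff.mp hy).2
    refine ⟨insert y L, insert_subset (mem_sdiff.mp hy).1 hLS, by rw [card_insert_of_notMem hyL,
      hLcard], ?_⟩
    intro x hx z hz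
    obtain ⟨hzS, hzyL⟩ := mem_sdiff.mp hz
    have hzL : z ∉ L := fun h => hzyL (mem_insert_of_mem h)
    rcases mem_insert.mp hx with rfl | hxL
    · have hzx : z ≠ x := fun h => hzyL (h ▸ mem_insert_self z L)
      exact (hymin z (mem_sdiff.mpr ⟨hzS, hzL⟩)).lt_of_ne
        fun h => hzx (hf hzS (mem_sdiff.mp hy).1 h.symm)
    · exact hLsep x hxL z (mem_sdiff.mpr ⟨hzS, hzL⟩)

theorem card_inter_add_card_inter_of_subset_union {A B L : Finset α} (hd : Disjoint A B)
    (hL : L ⊆ A ∪ B) : #(A ∩ L) + #(B ∩ L) = #L := by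
  rw [← card_union_of_disjoint (hd.mono inter_subset_left inter_subset_left),
    ← union_inter_distrib_right, inter_eq_right.mpr hL]

theorem card_sdiff_eq_card_inter_of_card_eq {A B L : Finset α} (hd : Disjoint A B)
    (hAB : #A = #B) (hL : L ⊆ A ∪ B) (hLcard : #L = #A) : #(B \ L) = #(A ∩ L) := by
  have hsplit := card_inter_add_card_inter_of_subset_union hd hL
  have hB : #(B \ L) + #(B ∩ L) = #B := card_sdiff_add_card_inter B L
  omega

theorem exists_separated_subsets_of_le_card [LT β] {f : α → β} {L S X Y : Finset α}
    (hsep : ∀ x ∈ L, ∀ y ∈ S \ L, f x < f y) (hY : Y ⊆ S) {k : ℕ}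
    (hX : k ≤ #(X ∩ L)) (hYk : k ≤ #(Y \ L)) :
    ∃ X' Y' : Finset α, X' ⊆ X ∧ Y' ⊆ Y ∧ #X' = k ∧ #Y' = k ∧ ∀ a ∈ X', ∀ b ∈ Y', f a < f b := by
  obtain ⟨X', hX', hX'card⟩ := exists_subset_card_eq hX
  obtain ⟨Y', hY', hY'card⟩ := exists_subset_card_eq hYk
  refine ⟨X', Y', hX'.trans inter_subset_left, hY'.trans sdiff_subset, hX'card, hY'card, ?_⟩
  intro a ha b hb
  exact hsep a (mem_inter.mp (hX' ha)).2 b (sdiff_subset_sdiff hY le_rfl (hY' hb))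

end

/-- Let `A` and `B` be disjoint finite sets with `|A| = |B| = n`, and let
a linear order on `A ∪ B` be given by a function `f` that is injective on `A ∪ B`. Then
there are subsets `A'` of one of the two parts and `B'` of the other part, with
`|A'| = |B'| = ⌈n/2⌉`, such that every element of `A'` precedes every element of `B'`. -/
theorem exists_separated_halves {α : Type*} [DecidableEq α] (n : ℕ) (A B : Finset α)
    (hd : Disjoint A B) (hA : A.card = n) (hB : B.card = n)
    (f : α → ℕ) (hf : Set.InjOn f (↑(A ∪ B) : Set α)) :
    ∃ A' B' : Finset α,
      ((A' ⊆ A ∧ B' ⊆ B) ∨ (A' ⊆ B ∧ B' ⊆ A)) ∧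
      A'.card = (n + 1) / 2 ∧ B'.card = (n + 1) / 2 ∧
      ∀ a ∈ A', ∀ b ∈ B', f a < f b := by
  obtain ⟨L, hL, hLcard, hsep⟩ := exists_subset_card_eq_forall_lt_of_injOn hf
    (m := n) (by rw [card_union_of_disjoint hd]; omega)
  have hBL := card_sdiff_eq_card_inter_of_card_eq hd (hA.trans hB.symm) hL (hLcard.trans hA.symm)
  have hAL := card_sdiff_eq_card_inter_of_card_eq hd.symm (hB.trans hA.symm)
    (union_comm A B ▸ hL) (hLcard.trans hB.symm)
  by_cases hk : (n + 1) / 2 ≤ #(A ∩ L)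
  · obtain ⟨A', B', hA', hB', h⟩ :=
      exists_separated_subsets_of_le_card hsep subset_union_right hk (hBL ▸ hk)
    exact ⟨A', B', .inl ⟨hA', hB'⟩, h⟩
  · have hk' : (n + 1) / 2 ≤ #(B ∩ L) := by
      have hsplit := card_inter_add_card_inter_of_subset_union hd hL
      omega
    obtain ⟨A', B', hA', hB', h⟩ :=
      exists_separated_subsets_of_le_card hsep subset_union_left hk' (hAL ▸ hk')
    exact ⟨A', B', .inr ⟨hA', hB'⟩, h⟩

end MixedPaper
end
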